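/- arXiv:1703.10913 — 5 statements merged into one kernel-verified Lean document; each statement's English description precedes it below -/
import Mathlib

section
/- If a ternary relation ⫝ on small subsets of a monster model satisfies invariance, monotonicity, transitivity, normality, full existence, and symmetry, then ⫝ satisfies extension: whenever A ⫝_C B and B̂ ⊇ B, there exists A' with the same type as A over B ∪ C such that A' ⫝_C B̂. -/
/-- If a ternary relation on subsets of a structure satisfies invariance (under a
group of automorphisms), monotonicity, transitivity, normality, full existence,
and symmetry, then it satisfies extension.  Here `A' ≡_C A` is formalized as:
some permutation in `G` fixes `C` pointwise and maps `A` onto `A'`. -/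
theorem extension_of_full_existence {M : Type*} (G : Subgroup (Equiv.Perm M))
    (ind : Set M → Set M → Set M → Prop)
    -- invariance
    (hinv : ∀ g ∈ G, ∀ A C B : Set M, ind A C B → ind (g '' A) (g '' C) (g '' B))
    -- monotonicity
    (hmono : ∀ A A' B B' C : Set M, ind A C B → A' ⊆ A → B' ⊆ B → ind A' C B')
    -- transitivity
    (htrans : ∀ A B C D : Set M, D ⊆ C → C ⊆ B → ind B C A → ind C D A → ind B D A)
    -- normality
    (hnorm : ∀ A B C : Set M, ind A C B → ind (A ∪ C) C B)
    -- full existence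
    (hfe : ∀ A B C : Set M, ∃ A' : Set M,
      (∃ g ∈ G, (∀ c ∈ C, g c = c) ∧ g '' A = A') ∧ ind A' C B)
    -- symmetry
    (hsym : ∀ A B C : Set M, ind A C B → ind B C A) :
    -- extension
    ∀ A B Bhat C : Set M, ind A C B → B ⊆ Bhat →
      ∃ A' : Set M, (∃ g ∈ G, (∀ x ∈ B ∪ C, g x = x) ∧ g '' A = A') ∧ ind A' C Bhat := by
  intro A B Bhat C hAB hBB
  -- full existence: find Bhat' ≡_{B ∪ C} Bhat with Bhat' ⫝_{B ∪ C} A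
  obtain ⟨Bhat', ⟨g, hgG, hgfix, hgim⟩, hind⟩ := hfe Bhat A (B ∪ C)
  -- A ⫝_C Bhat'
  have h1 : ind (B ∪ C) C A := hnorm B A C (hsym A B C hAB)
  have h2 : ind (Bhat' ∪ (B ∪ C)) (B ∪ C) A := hnorm Bhat' A (B ∪ C) hind
  have h3 : ind (Bhat' ∪ (B ∪ C)) C A :=
    htrans A (Bhat' ∪ (B ∪ C)) (B ∪ C) C Set.subset_union_right
      Set.subset_union_right h2 h1
  have h4 : ind Bhat' C A := hmono _ Bhat' _ A _ h3 Set.subset_union_left le_rfl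
  have h5 : ind A C Bhat' := hsym Bhat' A C h4
  -- pull back along g⁻¹
  have hfix' : ∀ x ∈ B ∪ C, g.symm x = x := by
    intro x hx
    conv_lhs => rw [← hgfix x hx]
    exact g.symm_apply_apply x
  have hcoe : ⇑(g⁻¹ : Equiv.Perm M) = ⇑g.symm := rfl
  refine ⟨⇑g.symm '' A, ⟨g⁻¹, G.inv_mem hgG, by rw [hcoe]; exact hfix', by rw [hcoe]⟩, ?_⟩
  have hC : ⇑g.symm '' C = C := by
    ext x
    constructor
    · rintro ⟨c, hc, rfl⟩
      rwa [hfix' c (Or.inr hc)]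
    · intro hx
      exact ⟨x, hx, hfix' x (Or.inr hx)⟩
  have hBhat : ⇑g.symm '' Bhat' = Bhat := by
    rw [← hgim, ← Set.image_comp]
    simp
  have := hinv g⁻¹ (G.inv_mem hgG) A C Bhat' h5
  rw [hcoe] at this
  rwa [hC, hBhat] at this
end

section
/- In any first-order structure M, the algebraic independence relation ⫝ᵃ has the countable union property: if A, B, C are countable, C = ⋃ₙ Cₙ with Cₙ ⊆ Cₙ₊₁ and A ⫝ᵃ_{Cₙ} B for each n, then A ⫝ᵃ_C B. -/
open FirstOrder

/-- First-order algebraic closure: `b ∈ Acl L X` iff `b` satisfies a formula with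
parameters from `X` that has only finitely many solutions. -/
def Acl (L : FirstOrder.Language) {M : Type*} [L.Structure M] (X : Set M) : Set M :=
  {b | ∃ (n : ℕ) (φ : L.Formula (Fin n ⊕ Fin 1)) (c : Fin n → M),
    (∀ i, c i ∈ X) ∧
    {y : M | φ.Realize (Sum.elim c (fun _ => y))}.Finite ∧
    φ.Realize (Sum.elim c (fun _ => b))}

lemma Acl_mono (L : FirstOrder.Language) {M : Type*} [L.Structure M] {X Y : Set M}
    (h : X ⊆ Y) : Acl L X ⊆ Acl L Y := by
  rintro b ⟨n, φ, c, hc, hfin, hreal⟩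
  exact ⟨n, φ, c, fun i => h (hc i), hfin, hreal⟩

lemma Acl_finChar (L : FirstOrder.Language) {M : Type*} [L.Structure M]
    {X : Set M} {Cn : ℕ → Set M} (hmono : ∀ n, Cn n ⊆ Cn (n + 1)) {b : M}
    (hb : b ∈ Acl L (X ∪ ⋃ n, Cn n)) : ∃ N, b ∈ Acl L (X ∪ Cn N) := by
  obtain ⟨n, φ, c, hc, hfin, hreal⟩ := hb
  have hmono' : Monotone Cn := monotone_nat_of_le_succ hmono
  have hex : ∀ i, ∃ k, c i ∈ X ∪ Cn k := by
    intro i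
    rcases hc i with h | h
    · exact ⟨0, Or.inl h⟩
    · obtain ⟨k, hk⟩ := Set.mem_iUnion.mp h
      exact ⟨k, Or.inr hk⟩
  choose f hf using hex
  refine ⟨Finset.univ.sup f, n, φ, c, fun i => ?_, hfin, hreal⟩
  rcases hf i with h | h
  · exact Or.inl h
  · exact Or.inr (hmono' (Finset.le_sup (Finset.mem_univ i)) h)

/-- In any first-order structure, algebraic independence has the countable union
property. -/
theorem aclIndep_countable_union (L : FirstOrder.Language) {M : Type*} [L.Structure M]
    (A B : Set M) (Cn : ℕ → Set M) (C : Set M)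
    (hA : A.Countable) (hB : B.Countable) (hC : C.Countable)
    (hCU : C = ⋃ n, Cn n) (hmono : ∀ n, Cn n ⊆ Cn (n + 1))
    (hind : ∀ n, Acl L (A ∪ Cn n) ∩ Acl L (B ∪ Cn n) = Acl L (Cn n)) :
    Acl L (A ∪ C) ∩ Acl L (B ∪ C) = Acl L C := by
  have hmono' : Monotone Cn := monotone_nat_of_le_succ hmono
  subst hCU
  apply Set.Subset.antisymm
  · rintro b ⟨h1, h2⟩
    obtain ⟨N1, h1⟩ := Acl_finChar L hmono h1
    obtain ⟨N2, h2⟩ := Acl_finChar L hmono h2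
    set N := max N1 N2
    have h1' : b ∈ Acl L (A ∪ Cn N) :=
      Acl_mono L (Set.union_subset_union_right A (hmono' (le_max_left N1 N2))) h1
    have h2' : b ∈ Acl L (B ∪ Cn N) :=
      Acl_mono L (Set.union_subset_union_right B (hmono' (le_max_right N1 N2))) h2
    have : b ∈ Acl L (Cn N) := (hind N) ▸ ⟨h1', h2'⟩
    exact Acl_mono L (Set.subset_iUnion Cn N) this
  · intro b hb
    exact ⟨Acl_mono L Set.subset_union_right hb, Acl_mono L Set.subset_union_right hb⟩
end

section
/- In any first-order structure, the covering relation ⫝ᶜ implies algebraic independence ⫝ᵃ: if C covers A in B, then acl(A∪C) ∩ acl(B∪C) ⊆ acl(C). -/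
/-!
Suppose `e ∈ acl(A ∪ C) ∩ acl(B ∪ C)` lies outside `acl(C)`, as a solution of `φ(a, y)` and of
`ψ(b, y)`, both with finitely many solutions, `k` of them for `ψ(b, y)`. The finitely many points
of `φ(a, M) ∩ acl(C)` lie in a single finite `C`-definable set `χ(u, M)`, which misses `e`. Once the
`C`-coordinates of `a` and `b` are moved into the parameters, covering transfers
"`∃ y, φ(a, y) ∧ ψ(b, y) ∧ ¬χ(u, y)`, and `ψ(b, y)` has at most `k` solutions" from `b` to a tuple
`d` from `C`. Such a `y` is then algebraic over `C` via `ψ(d, y)`, so it lies in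
`φ(a, M) ∩ acl(C) ⊆ χ(u, M)`: a contradiction.
-/

open FirstOrder

theorem Set.encard_le_coe_iff_forall_not_injective {α : Type*} {s : Set α} {k : ℕ} :
    s.encard ≤ k ↔ ∀ f : Fin (k + 1) → α, (∀ i, f i ∈ s) → ¬ f.Injective := by
  constructor
  · intro hs f hf hinj
    have hcard :=
      hinj.encard_range.trans ((Set.encard_le_encard (Set.range_subset_iff.2 hf)).trans hs)
    simp only [ENat.card_eq_coe_fintype_card, Fintype.card_fin] at hcard
    norm_cast at hcard
    omega
  · intro h
    by_contra! hs
    obtain ⟨t, hts, ht⟩ := Set.exists_subset_encard_eq (Order.add_one_le_of_lt hs)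
    have htfin := Set.finite_of_encard_eq_coe ht
    have ht' : Nat.card t = k + 1 := by
      rw [Nat.card_coe_set_eq, ← ENat.natCast_inj, htfin.cast_ncard_eq, ht]; rfl
    have := htfin.to_subtype
    let e := Finite.equivFinOfCardEq ht'
    exact h (fun i => e.symm i) (fun i => hts (e.symm i).2)
      (Subtype.val_injective.comp e.symm.injective)

namespace FirstOrder.Language

variable {L : Language} {M : Type*} [L.Structure M]

def Formula.solutionSet {α : Type*} (φ : L.Formula (α ⊕ Fin 1)) (c : α → M) : Set M :=
  {y | φ.Realize (Sum.elim c fun _ => y)}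

theorem Formula.realize_iExs_fin_one {α : Type*} (φ : L.Formula (α ⊕ Fin 1)) (c : α → M) :
    (φ.iExs (Fin 1)).Realize c ↔ (φ.solutionSet c).Nonempty := by
  rw [Formula.realize_iExs, ← (Equiv.funUnique (Fin 1) M).symm.exists_congr_right]
  rfl

noncomputable def Formula.atMostSolutions {α : Type*} (ψ : L.Formula (α ⊕ Fin 1)) (k : ℕ) :
    L.Formula α :=
  Formula.iAlls (Fin (k + 1))
    ((Formula.iInf fun i => ψ.relabel (Sum.elim Sum.inl fun _ => Sum.inr i)).imp
      (Formula.iSup fun p : {p : Fin (k + 1) × Fin (k + 1) // p.1 ≠ p.2} =>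
        Term.equal (var (Sum.inr p.1.1)) (var (Sum.inr p.1.2))))

theorem Formula.realize_atMostSolutions {α : Type*} (ψ : L.Formula (α ⊕ Fin 1)) (k : ℕ)
    (c : α → M) : (ψ.atMostSolutions k).Realize c ↔ (ψ.solutionSet c).encard ≤ k := by
  rw [Set.encard_le_coe_iff_forall_not_injective]
  have hvar (y : Fin (k + 1) → M) (i : Fin (k + 1)) :
      Sum.elim c y ∘ Sum.elim Sum.inl (fun _ : Fin 1 => Sum.inr i) = Sum.elim c fun _ => y i := by
    ext (x | x) <;> rfl
  simp [atMostSolutions, Formula.realize_relabel, hvar, Function.Injective, solutionSet, and_comm]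

theorem exists_solutionSet_append_eq_union {s t : ℕ} (χ₁ : L.Formula (Fin s ⊕ Fin 1))
    (χ₂ : L.Formula (Fin t ⊕ Fin 1)) (u₁ : Fin s → M) (u₂ : Fin t → M) :
    ∃ χ : L.Formula (Fin (s + t) ⊕ Fin 1),
      χ.solutionSet (Fin.append u₁ u₂) = χ₁.solutionSet u₁ ∪ χ₂.solutionSet u₂ := by
  refine ⟨χ₁.relabel (Sum.map (Fin.castAdd t) id) ⊔ χ₂.relabel (Sum.map (Fin.natAdd s) id), ?_⟩
  ext y
  have h₁ : Fin.append u₁ u₂ ∘ Fin.castAdd t = u₁ := funext (Fin.append_left u₁ u₂)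
  have h₂ : Fin.append u₁ u₂ ∘ Fin.natAdd s = u₂ := funext (Fin.append_right u₁ u₂)
  simp only [Formula.solutionSet, Set.mem_ofPred_eq, Set.mem_union, Formula.realize_sup,
    Formula.realize_relabel, Sum.elim_comp_map, h₁, h₂, Function.comp_id]

theorem exists_solutionSet_finite_superset {C G : Set M} (hG : G.Finite) (hGC : G ⊆ Acl L C) :
    ∃ (t : ℕ) (χ : L.Formula (Fin t ⊕ Fin 1)) (u : Fin t → M),
      (∀ i, u i ∈ C) ∧ (χ.solutionSet u).Finite ∧ G ⊆ χ.solutionSet u := by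
  induction G, hG using Set.Finite.induction_on with
  | empty =>
    exact ⟨0, ⊥, Fin.elim0, (·.elim0), by simp [Formula.solutionSet], Set.empty_subset _⟩
  | @insert g G' _ _ ih =>
    obtain ⟨s, χ₁, u₁, hu₁, hfin₁, hg₁⟩ := hGC (Set.mem_insert g G')
    obtain ⟨t, χ₂, u₂, hu₂, hfin₂, hG₂⟩ := ih ((Set.subset_insert g G').trans hGC)
    obtain ⟨χ, hχ⟩ := exists_solutionSet_append_eq_union χ₁ χ₂ u₁ u₂
    refine ⟨s + t, χ, Fin.append u₁ u₂, Fin.addCases (by simpa using hu₁) (by simpa using hu₂), ?_⟩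
    rw [hχ]
    exact ⟨hfin₁.union hfin₂, Set.insert_subset (Or.inl hg₁) (hG₂.trans Set.subset_union_right)⟩

/-- The relation `A ⫝ᶜ_C B`, with tuples indexed by arbitrary finite types. -/
def Covers (L : Language) {M : Type*} [L.Structure M] (A B C : Set M) : Prop :=
  ∀ (α β γ : Type) [Finite α] [Finite β] [Finite γ] (φ : L.Formula ((α ⊕ β) ⊕ γ))
    (a : α → M) (b : β → M) (c : γ → M), (∀ i, a i ∈ A) → (∀ i, b i ∈ B) → (∀ i, c i ∈ C) →
    φ.Realize (Sum.elim (Sum.elim a b) c) →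
    ∃ d : β → M, (∀ i, d i ∈ C) ∧ φ.Realize (Sum.elim (Sum.elim a d) c)

theorem Covers.of_fin {A B C : Set M}
    (h : ∀ (p q r : ℕ) (φ : L.Formula ((Fin p ⊕ Fin q) ⊕ Fin r))
      (a : Fin p → M) (b : Fin q → M) (c : Fin r → M),
      (∀ i, a i ∈ A) → (∀ i, b i ∈ B) → (∀ i, c i ∈ C) →
      φ.Realize (Sum.elim (Sum.elim a b) c) →
      ∃ d : Fin q → M, (∀ i, d i ∈ C) ∧ φ.Realize (Sum.elim (Sum.elim a d) c)) :
    Covers L A B C := by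
  intro α β γ _ _ _ φ a b c ha hb hc hφ
  let eα := Finite.equivFin α
  let eβ := Finite.equivFin β
  let eγ := Finite.equivFin γ
  have hre (d : β → M) : Sum.elim (Sum.elim (a ∘ eα.symm) (d ∘ eβ.symm)) (c ∘ eγ.symm) ∘
      Sum.map (Sum.map eα eβ) eγ = Sum.elim (Sum.elim a d) c := by
    ext ((i | i) | i) <;> simp
  obtain ⟨d, hdC, hd⟩ := h _ _ _ (φ.relabel (Sum.map (Sum.map eα eβ) eγ)) (a ∘ eα.symm)
    (b ∘ eβ.symm) (c ∘ eγ.symm) (fun i => ha _) (fun i => hb _) (fun i => hc _)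
    (by rwa [Formula.realize_relabel, hre])
  refine ⟨d ∘ eβ, fun i => hdC _, ?_⟩
  rw [← hre, Function.comp_assoc d, eβ.self_comp_symm, Function.comp_id]
  rwa [Formula.realize_relabel] at hd

theorem Covers.union {A B C : Set M} (h : Covers L A B C) : Covers L (A ∪ C) (B ∪ C) C := by
  classical
  intro α β γ _ _ _ φ a b c ha hb hc hφ
  -- Entries of `a` outside `A` and of `b` outside `B` lie in `C`; `g` moves them to the parameters.
  let g : (α ⊕ β) ⊕ γ →
      ({i // a i ∈ A} ⊕ {j // b j ∈ B}) ⊕ ((γ ⊕ {i // a i ∉ A}) ⊕ {j // b j ∉ B}) :=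
    Sum.elim
      (Sum.elim (fun i => if hi : a i ∈ A then .inl (.inl ⟨i, hi⟩) else .inr (.inl (.inr ⟨i, hi⟩)))
        (fun j => if hj : b j ∈ B then .inl (.inr ⟨j, hj⟩) else .inr (.inr ⟨j, hj⟩)))
      (fun k => .inr (.inl (.inl k)))
  let c' := Sum.elim (Sum.elim c fun i : {i // a i ∉ A} => a i) fun j : {j // b j ∉ B} => b j
  let extend (d : {j // b j ∈ B} → M) (j : β) : M := if hj : b j ∈ B then d ⟨j, hj⟩ else b j
  have hg (d : {j // b j ∈ B} → M) :
      Sum.elim (Sum.elim (fun i : {i // a i ∈ A} => a i) d) c' ∘ g =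
        Sum.elim (Sum.elim a (extend d)) c := by
    ext ((i | j) | k)
    · by_cases hi : a i ∈ A <;> simp [g, c', hi]
    · by_cases hj : b j ∈ B <;> simp [g, c', extend, hj]
    · rfl
  have hextend : extend (fun j => b j) = b := by
    ext j
    by_cases hj : b j ∈ B <;> simp [extend, hj]
  have hc' : ∀ x, c' x ∈ C := by
    rintro ((k | i) | j)
    exacts [hc k, (ha i).resolve_left i.2, (hb j).resolve_left j.2]
  obtain ⟨d, hdC, hd⟩ := h _ _ _ (φ.relabel g) (fun i => a i) (fun j => b j) c' (·.2) (·.2) hc'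
    (by rwa [Formula.realize_relabel, hg, hextend])
  refine ⟨extend d, fun j => ?_, by rwa [Formula.realize_relabel, hg] at hd⟩
  by_cases hj : b j ∈ B
  · simpa [extend, hj] using hdC ⟨j, hj⟩
  · simpa [extend, hj] using (hb j).resolve_left hj

theorem Covers.acl_inter_subset {A B C : Set M} (h : Covers L A B C) :
    Acl L (A ∪ C) ∩ Acl L (B ∪ C) ⊆ Acl L C := by
  rintro e ⟨⟨n, φ, a, ha, hF, heF⟩, m, ψ, b, hb, hS, heS⟩
  by_contra he
  obtain ⟨t, χ, u, hu, hU, hFU⟩ :=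
    exists_solutionSet_finite_superset (hF.inter_of_left (Acl L C)) Set.inter_subset_right
  obtain ⟨k, hk⟩ := hS.exists_encard_eq_coe
  let Θ : L.Formula ((Fin n ⊕ Fin m) ⊕ Fin t) :=
    (φ.relabel (Sum.map (Sum.inl ∘ Sum.inl) id) ⊓ ψ.relabel (Sum.map (Sum.inl ∘ Sum.inr) id) ⊓
      ∼(χ.relabel (Sum.map Sum.inr id))).iExs (Fin 1) ⊓
    (ψ.atMostSolutions k).relabel (Sum.inl ∘ Sum.inr)
  have hΘ (d : Fin m → M) : Θ.Realize (Sum.elim (Sum.elim a d) u) ↔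
      (∃ y ∈ φ.solutionSet a ∩ ψ.solutionSet d, y ∉ χ.solutionSet u) ∧
        (ψ.solutionSet d).encard ≤ k := by
    simp only [Θ, Formula.realize_inf, Formula.realize_iExs_fin_one, Set.Nonempty,
      Formula.realize_relabel, Formula.realize_atMostSolutions, Formula.solutionSet,
      Set.mem_ofPred_eq, Set.mem_inter_iff, Formula.realize_not, Sum.elim_comp_map,
      ← Function.comp_assoc, Sum.elim_comp_inl, Sum.elim_comp_inr, Function.comp_id, and_assoc]
  obtain ⟨d, hdC, hd⟩ := h.union _ _ _ Θ a b u ha hb hu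
    ((hΘ b).2 ⟨⟨e, ⟨heF, heS⟩, fun heU => he ⟨t, χ, u, hu, hU, heU⟩⟩, hk.le⟩)
  obtain ⟨⟨y, ⟨hyF, hyd⟩, hyU⟩, hdk⟩ := (hΘ d).1 hd
  exact hyU (hFU ⟨hyF, m, ψ, d, hdC, Set.finite_of_encard_le_coe hdk, hyd⟩)

end FirstOrder.Language

/-- The covering relation implies algebraic independence: if `C` covers `A` in `B`,
then `acl(A ∪ C) ∩ acl(B ∪ C) ⊆ acl(C)`. -/
theorem cover_implies_aclIndep (L : FirstOrder.Language) {M : Type*} [L.Structure M]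
    (A B C : Set M)
    (hcov : ∀ (p q r : ℕ) (φ : L.Formula ((Fin p ⊕ Fin q) ⊕ Fin r))
      (a : Fin p → M) (b : Fin q → M) (c : Fin r → M),
      (∀ i, a i ∈ A) → (∀ i, b i ∈ B) → (∀ i, c i ∈ C) →
      φ.Realize (Sum.elim (Sum.elim a b) c) →
      ∃ d : Fin q → M, (∀ i, d i ∈ C) ∧ φ.Realize (Sum.elim (Sum.elim a d) c)) :
    Acl L (A ∪ C) ∩ Acl L (B ∪ C) ⊆ Acl L C :=
  (Language.Covers.of_fin hcov).acl_inter_subset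
end

section
/- Let (Ω, F, μ) be a probability space with F a σ-algebra, let M be a first-order structure, and let A, B, C be countable sets of functions from Ω to M such that for every first-order formula φ(v̄) and every tuple ā from A∪B∪C, the set {ω : M ⊨ φ(ā(ω))} belongs to F. Then the set {ω : A(ω) ⫝ᵃ_{C(ω)} B(ω)} belongs to F, where A(ω) = {a(ω) : a ∈ A} etc. -/
open FirstOrder MeasureTheory

/-!
At a sample point `ω`, `acl(X(ω))` is the union of the finite sets `θ(c̄(ω), M)`, where `θ` is an
algebraical formula (at most `k` solutions for every choice of parameters, a first-order
condition once `k` is fixed) and `c̄` a tuple from `X`; for countable `X` there are countably many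
such witnesses. So `acl(A(ω) ∪ C(ω)) ∩ acl(B(ω) ∪ C(ω)) ⊆ acl(C(ω))` iff for all witnesses `θ₁`
over `A ∪ C` and `θ₂` over `B ∪ C` the finite set `θ₁ ∩ θ₂` is covered by finitely many witnesses
over `C`. For fixed witnesses that covering is a single first-order formula in the random
parameters, so the event is a countable intersection of countable unions of measurable sets.
-/

open FirstOrder.Language Set Function

theorem Set.natCast_le_encard_iff_exists_injective {α : Type*} {s : Set α} {n : ℕ} :
    (n : ℕ∞) ≤ s.encard ↔ ∃ y : Fin n → α, Injective y ∧ ∀ i, y i ∈ s := by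
  constructor
  · intro h
    obtain ⟨t, hts, htn⟩ := exists_subset_encard_eq h
    obtain ⟨m, y, hy, rfl⟩ := (finite_of_encard_eq_coe htn).fin_param
    rw [← image_univ, hy.encard_image, encard_univ, ENat.card_eq_coe_fintype_card,
      Fintype.card_fin, Nat.cast_inj] at htn
    subst htn
    exact ⟨y, hy, fun i => hts (mem_range_self i)⟩
  · rintro ⟨y, hy, hys⟩
    calc (n : ℕ∞) = (range y).encard := by
          rw [← image_univ, hy.encard_image, encard_univ]; simp
      _ ≤ s.encard := encard_le_encard (range_subset_iff.2 hys)

theorem Set.Finite.subset_iUnion_iff_exists_finset {α ι : Type*} {s : Set α} (hs : s.Finite)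
    {t : ι → Set α} : s ⊆ ⋃ i, t i ↔ ∃ F : Finset ι, s ⊆ ⋃ i ∈ F, t i := by
  refine ⟨fun h => ?_, fun ⟨F, hF⟩ => hF.trans (iUnion₂_subset fun i _ => subset_iUnion t i)⟩
  obtain ⟨I, hI, hsI⟩ := finite_subset_iUnion hs h
  exact ⟨hI.toFinset, by simpa using hsI⟩

namespace FirstOrder.Language.Formula

variable {L : Language} {M : Type*} [L.Structure M] {α β : Type*}

def solSet (φ : L.Formula (α ⊕ Fin 1)) (c : α → M) : Set M :=
  {y | φ.Realize (Sum.elim c fun _ => y)}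

theorem solSet_inf (φ ψ : L.Formula (α ⊕ Fin 1)) (c : α → M) :
    (φ ⊓ ψ).solSet c = φ.solSet c ∩ ψ.solSet c :=
  ext fun _ => realize_inf

theorem solSet_iSup {ι : Type*} [Finite ι] (φ : ι → L.Formula (α ⊕ Fin 1)) (c : α → M) :
    (iSup φ).solSet c = ⋃ i, (φ i).solSet c :=
  ext fun _ => by simp only [solSet, mem_ofPred_eq, realize_iSup, mem_iUnion]

theorem solSet_relabel (φ : L.Formula (α ⊕ Fin 1)) (g : α → β) (c : β → M) :
    (φ.relabel (Sum.map g id)).solSet c = φ.solSet (c ∘ g) :=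
  ext fun _ => by simp only [solSet, mem_ofPred_eq, realize_relabel, Sum.elim_comp_map]; rfl

noncomputable def solSubset (φ ψ : L.Formula (α ⊕ Fin 1)) : L.Formula α :=
  iAlls (Fin 1) (φ.imp ψ)

theorem realize_solSubset (φ ψ : L.Formula (α ⊕ Fin 1)) (c : α → M) :
    (solSubset φ ψ).Realize c ↔ φ.solSet c ⊆ ψ.solSet c := by
  rw [solSubset, realize_iAlls, (Equiv.funUnique (Fin 1) M).forall_congr_left]
  simp only [realize_imp]
  rfl

noncomputable def solCardGe (φ : L.Formula (α ⊕ Fin 1)) (n : ℕ) : L.Formula α :=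
  iExs (Fin n) (iInf (fun i => φ.relabel (Sum.map id fun _ => i)) ⊓
    iInf fun ij : {ij : Fin n × Fin n // ij.1 ≠ ij.2} =>
      ((Term.var (Sum.inr ij.1.1)).equal (Term.var (Sum.inr ij.1.2))).not)

theorem realize_solCardGe (φ : L.Formula (α ⊕ Fin 1)) (n : ℕ) (c : α → M) :
    (φ.solCardGe n).Realize c ↔ (n : ℕ∞) ≤ (φ.solSet c).encard := by
  simp only [solCardGe, realize_iExs, realize_inf, realize_iInf, realize_relabel,
    Sum.elim_comp_map, realize_not, realize_equal, Term.realize_var, Sum.elim_inr,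
    natCast_le_encard_iff_exists_injective]
  refine exists_congr fun y => and_comm.trans (and_congr ?_ Iff.rfl)
  simp only [Subtype.forall, Prod.forall, ne_eq, Injective]
  exact forall₂_congr fun _ _ => not_imp_not

def IsAlgebraical (M : Type*) [L.Structure M] (φ : L.Formula (α ⊕ Fin 1)) : Prop :=
  ∃ n : ℕ, ∀ c : α → M, (φ.solSet c).encard ≤ n

noncomputable def withSolCardLE (φ : L.Formula (α ⊕ Fin 1)) (k : ℕ) : L.Formula (α ⊕ Fin 1) :=
  φ ⊓ (φ.solCardGe (k + 1)).not.relabel Sum.inl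

theorem solSet_withSolCardLE (φ : L.Formula (α ⊕ Fin 1)) (k : ℕ) (c : α → M) :
    (φ.withSolCardLE k).solSet c = {y | y ∈ φ.solSet c ∧ (φ.solSet c).encard ≤ k} := by
  ext y
  rw [withSolCardLE, solSet_inf]
  simp only [solSet, mem_inter_iff, mem_ofPred_eq, realize_relabel, Sum.elim_comp_inl,
    realize_not, realize_solCardGe, Nat.cast_add, Nat.cast_one,
    ENat.add_one_le_iff (ENat.natCast_ne_top k), not_lt]

theorem isAlgebraical_withSolCardLE (φ : L.Formula (α ⊕ Fin 1)) (k : ℕ) :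
    (φ.withSolCardLE k).IsAlgebraical M := by
  refine ⟨k, fun c => ?_⟩
  rw [solSet_withSolCardLE]
  by_cases hk : (φ.solSet c).encard ≤ k
  · exact (encard_le_encard fun y hy => hy.1).trans hk
  · simp [hk]

end FirstOrder.Language.Formula

namespace FirstOrder.Language

variable {L : Language} {M : Type*} [L.Structure M] {κ : Type*}

theorem acl_mono {X Y : Set M} (h : X ⊆ Y) : Acl L X ⊆ Acl L Y :=
  fun _ ⟨n, φ, c, hc, hφ⟩ => ⟨n, φ, c, fun i => h (hc i), hφ⟩

variable (L M) in
structure AlgWitness (κ : Type*) where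
  arity : ℕ
  formula : L.Formula (Fin arity ⊕ Fin 1)
  isAlgebraical : formula.IsAlgebraical M
  params : Fin arity → κ

namespace AlgWitness

def solSet (w : L.AlgWitness M κ) (ev : κ → M) : Set M :=
  w.formula.solSet (ev ∘ w.params)

theorem finite_solSet (w : L.AlgWitness M κ) (ev : κ → M) : (w.solSet ev).Finite := by
  obtain ⟨n, hn⟩ := w.isAlgebraical
  exact finite_of_encard_le_coe (hn _)

theorem countable (hL : ∀ n, Countable (L.Formula (Fin n))) [Countable κ] :
    Countable (L.AlgWitness M κ) := by
  have : ∀ n, Countable (L.Formula (Fin n ⊕ Fin 1)) := fun n =>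
    have := hL (n + 1)
    .of_equiv _ (BoundedFormula.relabelEquiv finSumFinEquiv).symm
  refine Injective.countable (f := fun w : L.AlgWitness M κ =>
    (⟨w.arity, w.formula, w.params⟩ : Σ n, L.Formula (Fin n ⊕ Fin 1) × (Fin n → κ))) ?_
  rintro ⟨n, φ, _, c⟩ ⟨n', φ', _, c'⟩ h
  obtain ⟨rfl, h⟩ := Sigma.mk.inj_iff.mp h
  obtain ⟨rfl, rfl⟩ := Prod.ext_iff.mp (eq_of_heq h)
  rfl

end AlgWitness

theorem acl_range_eq_iUnion_solSet (ev : κ → M) :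
    Acl L (range ev) = ⋃ w : L.AlgWitness M κ, w.solSet ev := by
  ext b
  simp only [mem_iUnion]
  constructor
  · rintro ⟨n, φ, c, hc, hfin, hb⟩
    choose p hp using hc
    obtain ⟨k, hk⟩ := hfin.exists_encard_eq_coe
    refine ⟨⟨n, φ.withSolCardLE k, φ.isAlgebraical_withSolCardLE k, p⟩, ?_⟩
    rw [AlgWitness.solSet, show ev ∘ p = c from funext hp, Formula.solSet_withSolCardLE]
    exact ⟨hb, hk.le⟩
  · rintro ⟨w, hw⟩
    exact ⟨w.arity, w.formula, ev ∘ w.params, fun i => mem_range_self _, w.finite_solSet ev, hw⟩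

theorem acl_range_inter_acl_range_subset_iff {κa κb κc : Type*} (ea : κa → M) (eb : κb → M)
    (ec : κc → M) :
    Acl L (range ea) ∩ Acl L (range eb) ⊆ Acl L (range ec) ↔
      ∀ (v : L.AlgWitness M κa) (w : L.AlgWitness M κb),
        ∃ F : Finset (L.AlgWitness M κc), v.solSet ea ∩ w.solSet eb ⊆ ⋃ u ∈ F, u.solSet ec := by
  simp only [acl_range_eq_iUnion_solSet, iUnion_inter_iUnion, iUnion₂_subset_iff]
  exact forall₂_congr fun v w =>
    ((v.finite_solSet ea).inter_of_left _).subset_iUnion_iff_exists_finset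

theorem acl_image_union_inter_acl_image_union_eq_iff {γ : Type*} (e : γ → M) (X Y Z : Set γ) :
    Acl L (e '' X ∪ e '' Z) ∩ Acl L (e '' Y ∪ e '' Z) = Acl L (e '' Z) ↔
      ∀ (v : L.AlgWitness M ↥(X ∪ Z)) (w : L.AlgWitness M ↥(Y ∪ Z)),
        ∃ F : Finset (L.AlgWitness M Z),
          v.solSet (e ∘ (↑)) ∩ w.solSet (e ∘ (↑)) ⊆ ⋃ u ∈ F, u.solSet (e ∘ (↑)) := by
  rw [subset_antisymm_iff, and_iff_left (subset_inter (acl_mono subset_union_right)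
    (acl_mono subset_union_right)), ← image_union, ← image_union, image_eq_range,
    image_eq_range, image_eq_range]
  exact acl_range_inter_acl_range_subset_iff _ _ _

variable {Ω : Type*} [MeasurableSpace Ω] {S : Set (Ω → M)}

theorem measurableSet_realize_of_finite
    (hS : ∀ (n : ℕ) (φ : L.Formula (Fin n)) (a : Fin n → Ω → M),
      (∀ i, a i ∈ S) → MeasurableSet {ω | φ.Realize fun i => a i ω})
    {α : Type*} [Finite α] (φ : L.Formula α) {a : α → Ω → M} (ha : ∀ i, a i ∈ S) :
    MeasurableSet {ω | φ.Realize fun i => a i ω} := by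
  obtain ⟨n, ⟨e⟩⟩ := Finite.exists_equiv_fin α
  simpa [Formula.realize_relabel, Function.comp_def] using
    hS n (φ.relabel e) (a ∘ e.symm) fun i => ha _

theorem measurableSet_solSet_inter_subset_biUnion
    (hS : ∀ (n : ℕ) (φ : L.Formula (Fin n)) (a : Fin n → Ω → M),
      (∀ i, a i ∈ S) → MeasurableSet {ω | φ.Realize fun i => a i ω})
    {α β ι : Type*} [Finite α] [Finite β] {γ : ι → Type*} [∀ i, Finite (γ i)]
    (φ : L.Formula (α ⊕ Fin 1)) (ψ : L.Formula (β ⊕ Fin 1)) (F : Finset ι)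
    (χ : ∀ i, L.Formula (γ i ⊕ Fin 1)) {a : α → Ω → M} {b : β → Ω → M}
    {c : ∀ i, γ i → Ω → M} (ha : ∀ x, a x ∈ S) (hb : ∀ x, b x ∈ S) (hc : ∀ i x, c i x ∈ S) :
    MeasurableSet
      {ω | φ.solSet (a · ω) ∩ ψ.solSet (b · ω) ⊆ ⋃ i ∈ F, (χ i).solSet (c i · ω)} := by
  let p : α ⊕ β ⊕ (Σ i : F, γ i) → Ω → M := Sum.elim a (Sum.elim b fun x => c x.1 x.2)
  have hp : ∀ x, p x ∈ S := by rintro (x | x | x) <;> simp [p, ha, hb, hc]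
  convert measurableSet_realize_of_finite hS (Formula.solSubset
    (φ.relabel (Sum.map Sum.inl id) ⊓ ψ.relabel (Sum.map (Sum.inr ∘ Sum.inl) id))
    (Formula.iSup fun i : F => (χ i).relabel (Sum.map (fun x => Sum.inr (Sum.inr ⟨i, x⟩)) id)))
    hp using 1
  ext ω
  simp only [mem_ofPred_eq, Formula.realize_solSubset, Formula.solSet_inf, Formula.solSet_iSup,
    Formula.solSet_relabel, iUnion_subtype]
  rfl

end FirstOrder.Language

theorem measurable_pointwise_aclIndep_general
    (L : FirstOrder.Language) {M : Type*} [L.Structure M]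
    (hcount : ∀ n : ℕ, Countable (L.Formula (Fin n)))
    {Ω : Type*} [MeasurableSpace Ω]
    (A B C : Set (Ω → M)) (hA : A.Countable) (hB : B.Countable) (hC : C.Countable)
    (hmeas : ∀ (n : ℕ) (φ : L.Formula (Fin n)) (a : Fin n → (Ω → M)),
      (∀ i, a i ∈ A ∪ B ∪ C) →
      MeasurableSet {ω : Ω | φ.Realize (fun i => a i ω)}) :
    MeasurableSet {ω : Ω |
      Acl L ((fun f : Ω → M => f ω) '' A ∪ (fun f : Ω → M => f ω) '' C) ∩
        Acl L ((fun f : Ω → M => f ω) '' B ∪ (fun f : Ω → M => f ω) '' C) =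
      Acl L ((fun f : Ω → M => f ω) '' C)} := by
  simp_rw [acl_image_union_inter_acl_image_union_eq_iff, ofPred_forall, ofPred_exists]
  have hW : ∀ X : Set (Ω → M), X.Countable → Countable (L.AlgWitness M X) := fun _ hX =>
    have := hX.to_subtype
    AlgWitness.countable hcount
  have := hW _ (hA.union hC)
  have := hW _ (hB.union hC)
  have := hW _ hC
  exact .iInter fun v => .iInter fun w => .iUnion fun F =>
    measurableSet_solSet_inter_subset_biUnion hmeas v.formula w.formula F (·.formula)
      (fun i => union_subset_union_left C subset_union_left (v.params i).2)
      (fun i => union_subset_union_left C subset_union_right (w.params i).2)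
      (fun u i => subset_union_right (u.params i).2)

/-- For countable sets `A, B, C` of random elements, the set of sample points at
which `A(ω)` is algebraically independent from `B(ω)` over `C(ω)` is measurable,
provided the events determined by first-order formulas are measurable. -/
theorem measurable_pointwise_aclIndep
    (L : FirstOrder.Language) {M : Type*} [L.Structure M]
    (hcount : ∀ n : ℕ, Countable (L.Formula (Fin n)))
    {Ω : Type*} [MeasurableSpace Ω] (μ : Measure Ω) [IsProbabilityMeasure μ]
    (A B C : Set (Ω → M)) (hA : A.Countable) (hB : B.Countable) (hC : C.Countable)
    (hmeas : ∀ (n : ℕ) (φ : L.Formula (Fin n)) (a : Fin n → (Ω → M)),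
      (∀ i, a i ∈ A ∪ B ∪ C) →
      MeasurableSet {ω : Ω | φ.Realize (fun i => a i ω)}) :
    MeasurableSet {ω : Ω |
      Acl L ((fun f : Ω → M => f ω) '' A ∪ (fun f : Ω → M => f ω) '' C) ∩
        Acl L ((fun f : Ω → M => f ω) '' B ∪ (fun f : Ω → M => f ω) '' C) =
      Acl L ((fun f : Ω → M => f ω) '' C)} :=
  measurable_pointwise_aclIndep_general L hcount A B C hA hB hC hmeas
end

section
/- Let acl be a closure operator on subsets of a set M (monotone, idempotent, extensive) with finite character. If the binary relation ⫝ᵃ defined by A ⫝ᵃ_C B ⟺ acl(A∪C) ∩ acl(B∪C) = acl(C) satisfies base monotonicity (A ⫝ᵃ_D B and D ⊆ C ⊆ B imply A ⫝ᵃ_C B for acl-closed sets), then the lattice of acl-closed sets is modular: for acl-closed sets X, Y, Z with Z ⊆ X, X ∩ acl(Y ∪ Z) = acl((X ∩ Y) ∪ Z). -/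
/-- If algebraic independence (for a closure operator with finite character)
satisfies base monotonicity, then the lattice of closed sets is modular:
for closed `X, Y, Z` with `Z ⊆ X`, `X ∩ acl(Y ∪ Z) = acl((X ∩ Y) ∪ Z)`. -/
theorem modular_of_base_monotonicity {M : Type*} (acl : Set M → Set M)
    (hext : ∀ X : Set M, X ⊆ acl X)
    (hmono : ∀ X Y : Set M, X ⊆ Y → acl X ⊆ acl Y)
    (hidem : ∀ X : Set M, acl (acl X) = acl X)
    (hfc : ∀ (X : Set M) (b : M), b ∈ acl X →
      ∃ X₀ : Set M, X₀ ⊆ X ∧ X₀.Finite ∧ b ∈ acl X₀)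
    (hbase : ∀ A B C D : Set M, acl A = A → acl B = B → acl C = C → acl D = D →
      D ⊆ C → C ⊆ B →
      acl (A ∪ D) ∩ acl (B ∪ D) = acl D →
      acl (A ∪ C) ∩ acl (B ∪ C) = acl C) :
    ∀ X Y Z : Set M, acl X = X → acl Y = Y → acl Z = Z → Z ⊆ X →
      X ∩ acl (Y ∪ Z) = acl ((X ∩ Y) ∪ Z) := by
  intro X Y Z hX hY hZ hZX
  set C := acl ((X ∩ Y) ∪ Z) with hCdef
  -- X ∩ Y is closed
  have hXY : acl (X ∩ Y) = X ∩ Y := by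
    apply Set.Subset.antisymm _ (hext _)
    intro a ha
    constructor
    · have := hmono (X ∩ Y) X Set.inter_subset_left ha; rwa [hX] at this
    · have := hmono (X ∩ Y) Y Set.inter_subset_right ha; rwa [hY] at this
  have hC : acl C = C := hidem _
  -- D = X ∩ Y ⊆ C
  have hDC : X ∩ Y ⊆ C := (Set.subset_union_left).trans (hext _)
  -- C ⊆ X
  have hCX : C ⊆ X := by
    have : (X ∩ Y) ∪ Z ⊆ X := Set.union_subset Set.inter_subset_left hZX
    have := hmono _ _ this
    rwa [hX] at this
  -- trivial independence: Y ⫝_{X∩Y} X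
  have htriv : acl (Y ∪ (X ∩ Y)) ∩ acl (X ∪ (X ∩ Y)) = acl (X ∩ Y) := by
    rw [Set.union_eq_self_of_subset_right Set.inter_subset_left,
        Set.union_eq_self_of_subset_right Set.inter_subset_right, hX, hY, hXY]
    exact Set.inter_comm Y X
  have hmain := hbase Y X C (X ∩ Y) hY hX hC hXY hDC hCX htriv
  -- acl (X ∪ C) = X
  have h1 : acl (X ∪ C) = X := by
    rw [Set.union_eq_self_of_subset_right hCX, hX]
  -- acl (Y ∪ C) = acl (Y ∪ Z)
  have h2 : acl (Y ∪ C) = acl (Y ∪ Z) := by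
    apply Set.Subset.antisymm
    · have hsub : Y ∪ C ⊆ acl (Y ∪ Z) := by
        apply Set.union_subset
        · exact (Set.subset_union_left).trans (hext _)
        · rw [hCdef]
          refine hmono _ _ (Set.union_subset_union_left Z Set.inter_subset_right)
      have := hmono _ _ hsub
      rwa [hidem] at this
    · apply hmono
      exact Set.union_subset_union_right Y ((Set.subset_union_right).trans (hext _))
  rw [h1, h2, hC] at hmain
  rw [← hmain, Set.inter_comm]
end
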